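/- For every tuple of n strings (S₁,…,Sₙ), the number of interesting pairs is O(n log n); concretely, the number of pairs (i,j) with i < j such that LCP(Sᵢ,Sₗ) < LCP(Sᵢ,Sⱼ) for all i < ℓ < j is at most 2n·⌈log₂ n⌉. -/

import Mathlib

def lcpLen {α : Type*} [DecidableEq α] : List α → List α → ℕ
  | a :: s, b :: t => if a = b then lcpLen s t + 1 else 0
  | _, _ => 0

/-- A pair `(i,j)` is interesting for the tuple `S` if `i < j` and every index strictly
between `i` and `j` has a smaller LCP with `Sᵢ` than `Sⱼ` does. -/
def Interesting {α : Type*} [DecidableEq α] (S : ℕ → List α) (i j : ℕ) : Prop :=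
  i < j ∧ ∀ l, i < l → l < j → lcpLen (S i) (S l) < lcpLen (S i) (S j)

/-!
For a non-adjacent interesting pair `(i, j)` let `g` be the largest LCP of `Sᵢ` with a string
strictly between `i` and `j`, and `l` the first index after `i` attaining it. The indices `m` with
`g ≤ LCP(Sᵢ, Sₘ)` form a ball `D` containing `i`, `l` and `j`. Since `LCP(Sᵢ, Sₗ) = g`, the balls of
radius `g + 1` around `i` and around `l` are disjoint parts of `D`, so one of them, around the
*center* `c ∈ {i, l}`, has at most `|D| / 2` elements. Charge the pair to `c`, to whether `c` is
`i` or `l`, and to the level `⌈log₂ |D|⌉ ∈ [2, ⌈log₂ n⌉]`. Two pairs charged to the same center with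
`g < g'` have `D' ⊆ B(c, g + 1)`, so their levels differ; hence the charge determines `g`, then `i`
(directly, or as the only left end whose first maximiser is `l`), and finally `j` as the first
index after `i` with LCP above `g`. Adjacent pairs `(i, i + 1)` are charged to `i` at level `1`.
-/

section Lcp

variable {α : Type*} [DecidableEq α]

@[simp]
lemma lcpLen_nil_left (t : List α) : lcpLen [] t = 0 := by
  cases t <;> rfl

@[simp]
lemma lcpLen_nil_right (s : List α) : lcpLen s [] = 0 := by
  cases s <;> rfl

lemma succ_le_lcpLen_cons_iff {a b : α} {s t : List α} {k : ℕ} :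
    k + 1 ≤ lcpLen (a :: s) (b :: t) ↔ a = b ∧ k ≤ lcpLen s t := by
  rw [lcpLen]
  split_ifs with h <;> simp [h]

lemma lcpLen_comm (s t : List α) : lcpLen s t = lcpLen t s := by
  induction s generalizing t with
  | nil => simp
  | cons a s ih =>
    cases t with
    | nil => simp
    | cons b t => simp only [lcpLen, ih, eq_comm]

lemma le_lcpLen_trans {h : ℕ} {a b c : List α} (hab : h ≤ lcpLen a b) (hbc : h ≤ lcpLen b c) :
    h ≤ lcpLen a c := by
  induction a generalizing b c h with
  | nil => simp_all
  | cons x a ih =>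
    cases h with
    | zero => exact Nat.zero_le _
    | succ k =>
      cases b with
      | nil => simp at hab
      | cons y b =>
        cases c with
        | nil => simp at hbc
        | cons z c =>
          rw [succ_le_lcpLen_cons_iff] at hab hbc ⊢
          exact ⟨hab.1.trans hbc.1, ih hab.2 hbc.2⟩

end Lcp

lemma Nat.clog_two_lt_of_two_mul_le {a b : ℕ} (ha : 0 < a) (hab : 2 * a ≤ b) :
    Nat.clog 2 a < Nat.clog 2 b := by
  rw [Nat.clog_of_two_le one_lt_two (by omega : 2 ≤ b)]
  exact Nat.lt_add_one_of_le (Nat.clog_mono_right 2 (by omega))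

section Ball

variable {α : Type*} [DecidableEq α] {S : ℕ → List α} {n x y m h h' : ℕ}

def lcpBall (S : ℕ → List α) (n x h : ℕ) : Finset ℕ :=
  {m ∈ Finset.Icc 1 n | h ≤ lcpLen (S x) (S m)}

lemma mem_lcpBall : m ∈ lcpBall S n x h ↔ (1 ≤ m ∧ m ≤ n) ∧ h ≤ lcpLen (S x) (S m) := by
  rw [lcpBall, Finset.mem_filter, Finset.mem_Icc]

lemma self_mem_lcpBall (hx : 1 ≤ x ∧ x ≤ n) (hxy : h ≤ lcpLen (S x) (S y)) :
    x ∈ lcpBall S n x h :=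
  mem_lcpBall.2 ⟨hx, le_lcpLen_trans hxy (lcpLen_comm (S x) (S y) ▸ hxy)⟩

lemma lcpBall_subset_lcpBall (hh : h ≤ h') : lcpBall S n x h' ⊆ lcpBall S n x h := fun _ hm ↦
  mem_lcpBall.2 ⟨(mem_lcpBall.1 hm).1, hh.trans (mem_lcpBall.1 hm).2⟩

lemma lcpBall_subset_of_le_lcpLen (hxy : h ≤ lcpLen (S x) (S y)) :
    lcpBall S n y h ⊆ lcpBall S n x h := fun _ hm ↦
  mem_lcpBall.2 ⟨(mem_lcpBall.1 hm).1, le_lcpLen_trans hxy (mem_lcpBall.1 hm).2⟩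

lemma lcpBall_eq_of_le_lcpLen (hxy : h ≤ lcpLen (S x) (S y)) :
    lcpBall S n x h = lcpBall S n y h :=
  (lcpBall_subset_of_le_lcpLen (lcpLen_comm (S x) (S y) ▸ hxy)).antisymm
    (lcpBall_subset_of_le_lcpLen hxy)

lemma card_lcpBall_le : (lcpBall S n x h).card ≤ n :=
  (Finset.card_filter_le _ _).trans (by simp)

lemma disjoint_lcpBall (hxy : lcpLen (S x) (S y) < h) :
    Disjoint (lcpBall S n x h) (lcpBall S n y h) := by
  refine Finset.disjoint_left.2 fun m hx hy ↦ hxy.not_ge ?_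
  exact le_lcpLen_trans (mem_lcpBall.1 hx).2 (lcpLen_comm (S y) (S m) ▸ (mem_lcpBall.1 hy).2)

lemma card_lcpBall_succ_add_le (hxy : lcpLen (S x) (S y) = h) :
    (lcpBall S n x (h + 1)).card + (lcpBall S n y (h + 1)).card ≤ (lcpBall S n x h).card := by
  rw [← Finset.card_union_of_disjoint (disjoint_lcpBall (by omega))]
  exact Finset.card_le_card <| Finset.union_subset
    (lcpBall_subset_lcpBall h.le_succ)
    ((lcpBall_subset_lcpBall h.le_succ).trans (lcpBall_subset_of_le_lcpLen hxy.ge))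

end Ball

section Separation

variable {α : Type*} [DecidableEq α] {S : ℕ → List α} {i j i' j' m : ℕ}

def sepLevel (S : ℕ → List α) (i j : ℕ) : ℕ :=
  (Finset.Ioo i j).sup fun m ↦ lcpLen (S i) (S m)

noncomputable def sepWitness (S : ℕ → List α) (i j : ℕ) : ℕ :=
  sInf {m | i < m ∧ lcpLen (S i) (S m) = sepLevel S i j}

lemma lcpLen_le_sepLevel (him : i < m) (hmj : m < j) : lcpLen (S i) (S m) ≤ sepLevel S i j :=
  Finset.le_sup (f := fun m ↦ lcpLen (S i) (S m)) (Finset.mem_Ioo.2 ⟨him, hmj⟩)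

lemma le_of_sepLevel_lt_lcpLen (him : i < m) (h : sepLevel S i j < lcpLen (S i) (S m)) :
    j ≤ m := by
  by_contra! hmj
  exact (lcpLen_le_sepLevel him hmj).not_gt h

lemma Interesting.sepLevel_lt (hI : Interesting S i j) (hij : i + 1 < j) :
    sepLevel S i j < lcpLen (S i) (S j) := by
  have hpos : 0 < lcpLen (S i) (S j) := (hI.2 (i + 1) (by omega) hij).trans_le' (Nat.zero_le _)
  exact (Finset.sup_lt_iff hpos).2 fun m hm ↦ hI.2 m (Finset.mem_Ioo.1 hm).1 (Finset.mem_Ioo.1 hm).2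

lemma Interesting.right_eq_of_sepLevel_eq (hI : Interesting S i j) (hI' : Interesting S i j')
    (hij : i + 1 < j) (hij' : i + 1 < j') (hg : sepLevel S i j = sepLevel S i j') : j = j' :=
  le_antisymm (le_of_sepLevel_lt_lcpLen (by omega) (hg ▸ hI'.sepLevel_lt hij'))
    (le_of_sepLevel_lt_lcpLen (by omega) (hg ▸ hI.sepLevel_lt hij))

lemma sepWitness_spec (hij : i + 1 < j) :
    i < sepWitness S i j ∧ sepWitness S i j < j ∧
      lcpLen (S i) (S (sepWitness S i j)) = sepLevel S i j := by
  obtain ⟨l, hl, hl_eq⟩ := Finset.exists_mem_eq_sup (Finset.Ioo i j)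
    ⟨i + 1, Finset.mem_Ioo.2 ⟨by omega, hij⟩⟩ fun m ↦ lcpLen (S i) (S m)
  rw [Finset.mem_Ioo] at hl
  have hmem : l ∈ {m | i < m ∧ lcpLen (S i) (S m) = sepLevel S i j} := ⟨hl.1, hl_eq.symm⟩
  obtain ⟨hi, heq⟩ := Nat.sInf_mem ⟨l, hmem⟩
  exact ⟨hi, (Nat.sInf_le hmem).trans_lt hl.2, heq⟩

lemma lcpLen_lt_sepLevel_of_lt_sepWitness (hij : i + 1 < j) (him : i < m)
    (hm : m < sepWitness S i j) : lcpLen (S i) (S m) < sepLevel S i j :=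
  (lcpLen_le_sepLevel him (hm.trans (sepWitness_spec hij).2.1)).lt_of_ne
    fun h ↦ Nat.notMem_of_lt_sInf hm ⟨him, h⟩

/-- A second left end `i < i'` would lie before the witness and share the level with `Sᵢ`,
contradicting the minimality of the witness. -/
lemma left_le_of_sepWitness_eq (hij : i + 1 < j) (hij' : i' + 1 < j')
    (hl : sepWitness S i j = sepWitness S i' j') (hg : sepLevel S i j = sepLevel S i' j') :
    i' ≤ i := by
  by_contra! hii'
  obtain ⟨-, -, hil⟩ := sepWitness_spec (S := S) hij
  obtain ⟨hi'l, -, hi'l_eq⟩ := sepWitness_spec (S := S) hij'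
  have hle : sepLevel S i j ≤ lcpLen (S i) (S i') :=
    le_lcpLen_trans hil.ge (lcpLen_comm (S i') _ ▸ hl ▸ hg ▸ hi'l_eq.ge)
  exact hle.not_gt (lcpLen_lt_sepLevel_of_lt_sepWitness hij hii' (hl ▸ hi'l))

end Separation

section Charging

variable {α : Type*} [DecidableEq α] {S : ℕ → List α} {n i j i' j' : ℕ}

noncomputable def sepCenter (S : ℕ → List α) (n i j : ℕ) : ℕ × Bool :=
  if (lcpBall S n i (sepLevel S i j + 1)).card ≤
      (lcpBall S n (sepWitness S i j) (sepLevel S i j + 1)).card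
  then (i, true) else (sepWitness S i j, false)

lemma sepCenter_mem_Icc (h1 : 1 ≤ i) (hjn : j ≤ n) (hij : i + 1 < j) :
    (sepCenter S n i j).1 ∈ Finset.Icc 1 n := by
  obtain ⟨hil, hlj, -⟩ := sepWitness_spec (S := S) hij
  rw [Finset.mem_Icc]
  unfold sepCenter
  split_ifs <;> dsimp only <;> omega

lemma lcpBall_sepCenter (hij : i + 1 < j) :
    lcpBall S n (sepCenter S n i j).1 (sepLevel S i j) = lcpBall S n i (sepLevel S i j) := by
  obtain ⟨-, -, hl⟩ := sepWitness_spec (S := S) hij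
  unfold sepCenter
  split_ifs
  · rfl
  · exact (lcpBall_eq_of_le_lcpLen hl.ge).symm

lemma two_mul_card_lcpBall_sepCenter_le (hij : i + 1 < j) :
    2 * (lcpBall S n (sepCenter S n i j).1 (sepLevel S i j + 1)).card ≤
      (lcpBall S n i (sepLevel S i j)).card := by
  have := card_lcpBall_succ_add_le (n := n) (sepWitness_spec (S := S) hij).2.2
  unfold sepCenter
  split_ifs <;> dsimp only <;> omega

lemma Interesting.three_le_card_lcpBall (hI : Interesting S i j) (h1 : 1 ≤ i) (hjn : j ≤ n)
    (hij : i + 1 < j) : 3 ≤ (lcpBall S n i (sepLevel S i j)).card := by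
  obtain ⟨hil, hlj, hl⟩ := sepWitness_spec (S := S) hij
  have hsub : {i, sepWitness S i j, j} ⊆ lcpBall S n i (sepLevel S i j) := by
    simp only [Finset.insert_subset_iff, Finset.singleton_subset_iff]
    exact ⟨self_mem_lcpBall ⟨h1, by omega⟩ hl.ge, mem_lcpBall.2 ⟨⟨by omega, by omega⟩, hl.ge⟩,
      mem_lcpBall.2 ⟨⟨by omega, hjn⟩, (hI.sepLevel_lt hij).le⟩⟩
  refine le_trans ?_ (Finset.card_le_card hsub)
  have hi : i ∉ ({sepWitness S i j, j} : Finset ℕ) := by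
    simp only [Finset.mem_insert, Finset.mem_singleton]
    omega
  rw [Finset.card_insert_of_notMem hi, Finset.card_pair (by omega)]

lemma clog_card_lcpBall_lt_of_sepLevel_lt (h1' : 1 ≤ i') (hj'n : j' ≤ n) (hij : i + 1 < j)
    (hij' : i' + 1 < j') (hc : (sepCenter S n i j).1 = (sepCenter S n i' j').1)
    (hg : sepLevel S i j < sepLevel S i' j') :
    Nat.clog 2 (lcpBall S n i' (sepLevel S i' j')).card <
      Nat.clog 2 (lcpBall S n i (sepLevel S i j)).card := by
  have hsub : lcpBall S n i' (sepLevel S i' j') ⊆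
      lcpBall S n (sepCenter S n i j).1 (sepLevel S i j + 1) := by
    rw [← lcpBall_sepCenter hij', ← hc]
    exact lcpBall_subset_lcpBall hg
  have hi' : i' ∈ lcpBall S n i' (sepLevel S i' j') :=
    self_mem_lcpBall ⟨h1', by omega⟩ (sepWitness_spec hij').2.2.ge
  exact Nat.clog_two_lt_of_two_mul_le (Finset.card_pos.2 ⟨i', hi'⟩)
    ((Nat.mul_le_mul_left 2 (Finset.card_le_card hsub)).trans
      (two_mul_card_lcpBall_sepCenter_le hij))

lemma sepLevel_eq_of_sepCenter_eq (h1 : 1 ≤ i) (hjn : j ≤ n) (h1' : 1 ≤ i') (hj'n : j' ≤ n)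
    (hij : i + 1 < j) (hij' : i' + 1 < j') (hc : sepCenter S n i j = sepCenter S n i' j')
    (hlevel : Nat.clog 2 (lcpBall S n i (sepLevel S i j)).card =
      Nat.clog 2 (lcpBall S n i' (sepLevel S i' j')).card) :
    sepLevel S i j = sepLevel S i' j' := by
  rcases lt_trichotomy (sepLevel S i j) (sepLevel S i' j') with hg | hg | hg
  · exact absurd hlevel
      (clog_card_lcpBall_lt_of_sepLevel_lt h1' hj'n hij hij' (congrArg Prod.fst hc) hg).ne'
  · exact hg
  · exact absurd hlevel
      (clog_card_lcpBall_lt_of_sepLevel_lt h1 hjn hij' hij (congrArg Prod.fst hc).symm hg).ne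

lemma left_eq_of_sepCenter_eq (hij : i + 1 < j) (hij' : i' + 1 < j')
    (hc : sepCenter S n i j = sepCenter S n i' j') (hg : sepLevel S i j = sepLevel S i' j') :
    i = i' := by
  unfold sepCenter at hc
  split_ifs at hc <;> simp only [Prod.mk.injEq, Bool.true_eq_false, Bool.false_eq_true,
    and_false, and_true] at hc
  · exact hc
  · exact le_antisymm (left_le_of_sepWitness_eq hij' hij hc.symm hg.symm)
      (left_le_of_sepWitness_eq hij hij' hc hg)

def interestingPairs (S : ℕ → List α) (n : ℕ) : Set (ℕ × ℕ) :=
  {p | 1 ≤ p.1 ∧ p.2 ≤ n ∧ Interesting S p.1 p.2}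

noncomputable def charge (S : ℕ → List α) (n i j : ℕ) : (ℕ × Bool) × ℕ :=
  if j = i + 1 then ((i, true), 1)
  else (sepCenter S n i j, Nat.clog 2 (lcpBall S n i (sepLevel S i j)).card)

lemma Interesting.two_le_clog_card_lcpBall (hI : Interesting S i j) (h1 : 1 ≤ i) (hjn : j ≤ n)
    (hij : i + 1 < j) : 2 ≤ Nat.clog 2 (lcpBall S n i (sepLevel S i j)).card :=
  (Nat.lt_clog_iff_pow_lt one_lt_two).2 (hI.three_le_card_lcpBall h1 hjn hij)

lemma charge_mem (hp : (i, j) ∈ interestingPairs S n) :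
    charge S n i j ∈ (Finset.Icc 1 n ×ˢ Finset.univ) ×ˢ Finset.Icc 1 (Nat.clog 2 n) := by
  obtain ⟨h1, hjn, hI : Interesting S i j⟩ := hp
  have hij := hI.1
  unfold charge
  split_ifs with hadj
  · simp only [Finset.mem_product, Finset.mem_Icc, Finset.mem_univ, and_true]
    exact ⟨⟨h1, by omega⟩, le_rfl, Nat.clog_pos one_lt_two (by omega)⟩
  · have hlevel := hI.two_le_clog_card_lcpBall h1 hjn (by omega)
    simp only [Finset.mem_product, Finset.mem_Icc, Finset.mem_univ, and_true]
    exact ⟨Finset.mem_Icc.1 (sepCenter_mem_Icc h1 hjn (by omega)),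
      by omega, Nat.clog_mono_right 2 card_lcpBall_le⟩

lemma charge_injOn : Set.InjOn (fun p : ℕ × ℕ ↦ charge S n p.1 p.2) (interestingPairs S n) := by
  rintro ⟨i, j⟩ ⟨h1, hjn, hI : Interesting S i j⟩ ⟨i', j'⟩ ⟨h1', hj'n, hI' : Interesting S i' j'⟩
    heq
  have hij := hI.1
  have hij' := hI'.1
  simp only [charge] at heq
  split_ifs at heq with hadj hadj' hadj'
  · simp only [Prod.mk.injEq, and_true] at heq
    simp only [Prod.mk.injEq]
    omega
  · have := hI'.two_le_clog_card_lcpBall h1' hj'n (by omega)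
    simp only [Prod.mk.injEq] at heq
    omega
  · have := hI.two_le_clog_card_lcpBall h1 hjn (by omega)
    simp only [Prod.mk.injEq] at heq
    omega
  · obtain ⟨hc, hlevel⟩ := Prod.mk.inj heq
    have hg := sepLevel_eq_of_sepCenter_eq h1 hjn h1' hj'n (by omega) (by omega) hc hlevel
    obtain rfl := left_eq_of_sepCenter_eq (by omega) (by omega) hc hg
    rw [hI.right_eq_of_sepLevel_eq hI' (by omega) (by omega) hg]

end Charging

theorem count_interesting_pairs {α : Type*} [DecidableEq α] (n : ℕ) (S : ℕ → List α) :
    {p : ℕ × ℕ | 1 ≤ p.1 ∧ p.2 ≤ n ∧ Interesting S p.1 p.2}.ncard ≤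
      2 * n * Nat.clog 2 n := by
  calc (interestingPairs S n).ncard
      ≤ ((Finset.Icc 1 n ×ˢ Finset.univ) ×ˢ Finset.Icc 1 (Nat.clog 2 n) : Finset _).card := by
        rw [← Set.ncard_coe_finset]
        exact Set.ncard_le_ncard_of_injOn _ (fun p hp ↦ charge_mem hp) charge_injOn
          (Finset.finite_toSet _)
    _ = 2 * n * Nat.clog 2 n := by
      simp only [Finset.card_product, Nat.card_Icc, Nat.add_sub_cancel, Finset.card_univ,
        Fintype.card_bool]
      ring
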